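/- arXiv:2008.00734 — 5 statements merged into one kernel-verified Lean document; each statement's English description precedes it below -/
import Mathlib

section
/- The unitary group U(n) is generated by its orthogonal subgroup O(n) together with the subgroup U(1) = {diag(z,1,...,1) : |z|=1}. -/
/-!
A unitary matrix is reduced to the identity one column at a time. If every column of `U` outside
`s ∪ {k}` is the corresponding standard basis vector, unitarity makes column `k` a unit vector `v`
vanishing outside `s ∪ {k}`. Extending the standard basis vectors outside `s ∪ {k}` together with
the real unit vector `|v|` to an orthonormal basis gives a real orthogonal matrix, and multiplying
it on the left by the diagonal phase matrix `diag (v i / |v i|)` gives an element `g` of the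
subgroup whose columns outside `s` agree with those of `U`; so `g⁻¹ U` has one standard column
more. All diagonal phase matrices lie in the subgroup: the phase in coordinate `k` is conjugate,
by the permutation matrix of a transposition, to the phase in coordinate `i₀`.
-/

namespace Matrix

variable {ι : Type*} [Fintype ι] [DecidableEq ι]

lemma diagonal_mem_unitaryGroup {𝕜 : Type*} [RCLike 𝕜] {d : ι → 𝕜} (hd : ∀ i, ‖d i‖ = 1) :
    diagonal d ∈ unitaryGroup ι 𝕜 := by
  rw [mem_unitaryGroup_iff, star_eq_conjTranspose, diagonal_conjTranspose, diagonal_mul_diagonal,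
    ← diagonal_one]
  congr 1
  funext i
  simp [RCLike.mul_conj, hd]

lemma permMatrix_mem_unitaryGroup {α : Type*} [CommRing α] [StarRing α] (σ : Equiv.Perm ι) :
    σ.permMatrix α ∈ unitaryGroup ι α := by
  rw [mem_unitaryGroup_iff, star_eq_conjTranspose, conjTranspose_permMatrix, ← permMatrix_mul,
    inv_mul_cancel, permMatrix_one]

lemma map_ofReal_mem_unitaryGroup {A : Matrix ι ι ℝ} (hA : A ∈ orthogonalGroup ι ℝ) :
    A.map (↑) ∈ unitaryGroup ι ℂ := by
  rw [mem_unitaryGroup_iff] at hA ⊢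
  have hstar : star (A.map ((↑) : ℝ → ℂ)) = (star A).map (↑) := by
    ext i j
    simp
  rw [hstar]
  have hAℂ := congrArg Complex.ofRealHom.mapMatrix hA
  rwa [map_mul, map_one] at hAℂ

lemma UnitaryGroup.col_inv_mul_of_col_eq {α : Type*} [CommRing α] [StarRing α]
    {g U : unitaryGroup ι α} {j : ι} (h : (g : Matrix ι ι α).col j = (U : Matrix ι ι α).col j) :
    ((g⁻¹ * U : unitaryGroup ι α) : Matrix ι ι α).col j = Pi.single j 1 := by
  rw [← mulVec_single_one, UnitaryGroup.mul_val, ← mulVec_mulVec, mulVec_single_one, ← h,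
    ← mulVec_single_one, mulVec_mulVec, ← UnitaryGroup.mul_val, inv_mul_cancel,
    UnitaryGroup.one_val, one_mulVec]

lemma permMatrix_mul_diagonal_mul_permMatrix_inv {α : Type*} [CommRing α] (σ : Equiv.Perm ι)
    (d : ι → α) : σ.permMatrix α * diagonal d * σ⁻¹.permMatrix α = diagonal (d ∘ σ) := by
  rw [PEquiv.toMatrix_toPEquiv_mul, PEquiv.mul_toMatrix_toPEquiv, submatrix_submatrix,
    Equiv.Perm.inv_def, Equiv.symm_symm]
  exact submatrix_diagonal_equiv d σ

lemma UnitaryGroup.apply_eq_zero_of_col_eq_single {𝕜 : Type*} [RCLike 𝕜] (U : unitaryGroup ι 𝕜)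
    {j k : ι} (hjk : j ≠ k) (hj : (U : Matrix ι ι 𝕜).col j = Pi.single j 1) :
    (U : Matrix ι ι 𝕜) j k = 0 := by
  have h := congrFun (congrFun (UnitaryGroup.star_mul_self U) j) k
  rw [Matrix.mul_apply, one_apply_ne hjk] at h
  have hUj : ∀ i, (U : Matrix ι ι 𝕜) i j = (Pi.single j 1 : ι → 𝕜) i := congrFun hj
  simpa [hUj, Pi.single_apply] using h

lemma UnitaryGroup.sum_norm_sq_apply {𝕜 : Type*} [RCLike 𝕜] (U : unitaryGroup ι 𝕜) (k : ι) :
    ∑ i, ‖(U : Matrix ι ι 𝕜) i k‖ ^ 2 = 1 := by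
  have h := congrFun (congrFun (UnitaryGroup.star_mul_self U) k) k
  simp only [Matrix.mul_apply, one_apply_eq, star_apply, RCLike.star_def, RCLike.conj_mul] at h
  exact_mod_cast h

lemma orthonormal_insert_update_single {𝕜 : Type*} [RCLike 𝕜] {s : Set ι} {k : ι} (hk : k ∉ s)
    {w : EuclideanSpace 𝕜 ι} (hw : ‖w‖ = 1) (hws : ∀ j ∈ s, w j = 0) :
    Orthonormal 𝕜
      ((insert k s).domRestrict (Function.update (fun j => EuclideanSpace.single j 1) k w)) := by
  rw [orthonormal_iff_ite]
  rintro ⟨a, ha⟩ ⟨b, hb⟩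
  simp only [Set.domRestrict_apply, Subtype.mk.injEq]
  rcases ha with rfl | ha <;> rcases hb with rfl | hb
  · simp [hw]
  · have hba := ne_of_mem_of_not_mem hb hk
    simp [hba, hba.symm, EuclideanSpace.inner_single_right, hws b hb]
  · simp [ne_of_mem_of_not_mem ha hk, EuclideanSpace.inner_single_left, hws a ha]
  · simp [ne_of_mem_of_not_mem ha hk, ne_of_mem_of_not_mem hb hk,
      EuclideanSpace.inner_single_left]

lemma exists_mem_unitaryGroup_col_eq_of_orthonormal {𝕜 : Type*} [RCLike 𝕜] {s : Set ι}
    {v : ι → EuclideanSpace 𝕜 ι} (hv : Orthonormal 𝕜 (s.domRestrict v)) :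
    ∃ A ∈ unitaryGroup ι 𝕜, ∀ j ∈ s, A.col j = v j := by
  obtain ⟨b, hb⟩ := hv.exists_orthonormalBasis_extension_of_card_eq finrank_euclideanSpace
  refine ⟨(EuclideanSpace.basisFun ι 𝕜).toBasis.toMatrix b,
    (EuclideanSpace.basisFun ι 𝕜).toMatrix_orthonormalBasis_mem_unitary b, fun j hj => ?_⟩
  ext i
  simp [Module.Basis.toMatrix_apply, hb j hj]

lemma exists_mem_unitaryGroup_col_eq {𝕜 : Type*} [RCLike 𝕜] {s : Set ι} {k : ι} (hk : k ∉ s)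
    {w : ι → 𝕜} (hw : ∑ i, ‖w i‖ ^ 2 = 1) (hws : ∀ j ∈ s, w j = 0) :
    ∃ A ∈ unitaryGroup ι 𝕜, A.col k = w ∧ ∀ j ∈ s, A.col j = Pi.single j 1 := by
  have hw' : ‖WithLp.toLp 2 w‖ = 1 := by simp [EuclideanSpace.norm_eq, hw]
  obtain ⟨A, hA, hAcol⟩ :=
    exists_mem_unitaryGroup_col_eq_of_orthonormal (orthonormal_insert_update_single hk hw' hws)
  refine ⟨A, hA, by simpa using hAcol k (Set.mem_insert k s), fun j hj => ?_⟩
  ext i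
  simpa [ne_of_mem_of_not_mem hj hk, Pi.single_apply] using
    congrFun (hAcol j (Set.mem_insert_of_mem k hj)) i

def diagonalCircle : (ι → Circle) →* unitaryGroup ι ℂ where
  toFun d := ⟨diagonal fun i => d i, diagonal_mem_unitaryGroup fun i => Circle.norm_coe (d i)⟩
  map_one' := Subtype.ext (by simp)
  map_mul' d e := Subtype.ext (by simp)

@[simp]
lemma coe_diagonalCircle (d : ι → Circle) :
    (diagonalCircle d : Matrix ι ι ℂ) = diagonal fun i => (d i : ℂ) :=
  rfl

variable (ι) in
def realUnitaries : Set (unitaryGroup ι ℂ) :=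
  {U | ∀ i j, ((U : Matrix ι ι ℂ) i j).im = 0}

def phasesAt (i₀ : ι) : Set (unitaryGroup ι ℂ) :=
  {U | ∃ z : ℂ, ‖z‖ = 1 ∧ (U : Matrix ι ι ℂ) = diagonal (fun i => if i = i₀ then z else 1)}

def orthogonalPhaseSubgroup (i₀ : ι) : Subgroup (unitaryGroup ι ℂ) :=
  Subgroup.closure (realUnitaries ι ∪ phasesAt i₀)

section orthogonalPhaseSubgroup

variable {i₀ : ι}

lemma mem_orthogonalPhaseSubgroup_of_real {U : unitaryGroup ι ℂ}
    (hU : ∀ i j, ((U : Matrix ι ι ℂ) i j).im = 0) : U ∈ orthogonalPhaseSubgroup i₀ :=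
  Subgroup.subset_closure (Or.inl hU)

lemma permMatrix_mem_orthogonalPhaseSubgroup (σ : Equiv.Perm ι) :
    ⟨σ.permMatrix ℂ, permMatrix_mem_unitaryGroup σ⟩ ∈ orthogonalPhaseSubgroup i₀ :=
  mem_orthogonalPhaseSubgroup_of_real fun i j => by
    simp only [PEquiv.toMatrix_apply, apply_ite Complex.im, Complex.one_im, Complex.zero_im,
      ite_self]

lemma diagonalCircle_mulSingle_mem_orthogonalPhaseSubgroup (k : ι) (z : Circle) :
    diagonalCircle (Pi.mulSingle k z) ∈ orthogonalPhaseSubgroup i₀ := by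
  set P : unitaryGroup ι ℂ := ⟨(Equiv.swap i₀ k).permMatrix ℂ, permMatrix_mem_unitaryGroup _⟩
  have hconj :
      diagonalCircle (Pi.mulSingle k z) = P * diagonalCircle (Pi.mulSingle i₀ z) * P⁻¹ := by
    apply Subtype.ext
    rw [UnitaryGroup.mul_val, UnitaryGroup.mul_val, UnitaryGroup.inv_val, star_eq_conjTranspose]
    simp only [P, coe_diagonalCircle, conjTranspose_permMatrix,
      permMatrix_mul_diagonal_mul_permMatrix_inv]
    congr 1
    funext i
    simp [Pi.mulSingle_apply, Equiv.swap_apply_eq_iff]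
  have hphase : diagonalCircle (Pi.mulSingle i₀ z) ∈ orthogonalPhaseSubgroup i₀ := by
    refine Subgroup.subset_closure (Or.inr ⟨z, Circle.norm_coe z, ?_⟩)
    rw [coe_diagonalCircle]
    congr 1
    funext i
    rw [Pi.mulSingle_apply]
    split_ifs <;> simp
  rw [hconj]
  exact mul_mem (mul_mem (permMatrix_mem_orthogonalPhaseSubgroup _) hphase)
    (inv_mem (permMatrix_mem_orthogonalPhaseSubgroup _))

lemma diagonalCircle_mem_orthogonalPhaseSubgroup (d : ι → Circle) :
    diagonalCircle d ∈ orthogonalPhaseSubgroup i₀ := by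
  rw [← Finset.univ_prod_mulSingle d, ← Subgroup.mem_comap]
  exact Subgroup.prod_mem _ fun k _ => diagonalCircle_mulSingle_mem_orthogonalPhaseSubgroup k (d k)

lemma exists_mem_orthogonalPhaseSubgroup_col_eq {s : Set ι} {k : ι} (hk : k ∉ s) {v : ι → ℂ}
    (hv : ∑ i, ‖v i‖ ^ 2 = 1) (hvs : ∀ j ∈ s, v j = 0) :
    ∃ g ∈ orthogonalPhaseSubgroup i₀, (g : Matrix ι ι ℂ).col k = v ∧
      ∀ j ∈ s, (g : Matrix ι ι ℂ).col j = Pi.single j 1 := by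
  obtain ⟨A, hA, hAk, hAs⟩ := exists_mem_unitaryGroup_col_eq (𝕜 := ℝ) hk
    (w := fun i => ‖v i‖) (by simpa using hv) fun j hj => by simp [hvs j hj]
  -- `arg 0 = 0`, so the phase is `1` wherever `v` vanishes and the columns in `s` survive.
  set D := diagonalCircle fun i => Circle.exp (Complex.arg (v i))
  set R : unitaryGroup ι ℂ := ⟨A.map (↑), map_ofReal_mem_unitaryGroup hA⟩
  have hcol : ∀ j, ((D * R : unitaryGroup ι ℂ) : Matrix ι ι ℂ).col j =
      fun i => Complex.exp (Complex.arg (v i) * Complex.I) * A.col j i := by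
    intro j
    ext i
    simp [D, R, diagonal_mul]
  refine ⟨D * R, mul_mem (diagonalCircle_mem_orthogonalPhaseSubgroup _)
    (mem_orthogonalPhaseSubgroup_of_real fun i j => Complex.ofReal_im _), ?_, fun j hj => ?_⟩
  · rw [hcol, hAk]
    funext i
    rw [mul_comm]
    exact Complex.norm_mul_exp_arg_mul_I (v i)
  · rw [hcol, hAs j hj]
    funext i
    rcases eq_or_ne i j with rfl | hij
    · simp [hvs i hj]
    · simp [hij]

lemma mem_orthogonalPhaseSubgroup_of_col_eq_single (s : Finset ι) :
    ∀ U : unitaryGroup ι ℂ, (∀ j ∉ s, (U : Matrix ι ι ℂ).col j = Pi.single j 1) →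
      U ∈ orthogonalPhaseSubgroup i₀ := by
  induction s using Finset.induction_on with
  | empty =>
    intro U hU
    have hU1 : U = 1 := by
      ext i j
      simpa [Pi.single_apply, one_apply, eq_comm] using congrFun (hU j (Finset.notMem_empty j)) i
    rw [hU1]
    exact one_mem _
  | insert k s hks ih =>
    intro U hU
    have hne : ∀ j ∉ insert k s, j ≠ k := fun j hj hjk => hj (hjk ▸ Finset.mem_insert_self k s)
    obtain ⟨g, hg, hgk, hgs⟩ := exists_mem_orthogonalPhaseSubgroup_col_eq (i₀ := i₀)
      (s := {j | j ∉ insert k s}) (fun hk => hne k hk rfl) (UnitaryGroup.sum_norm_sq_apply U k)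
      fun j hj => UnitaryGroup.apply_eq_zero_of_col_eq_single U (hne j hj) (hU j hj)
    have hgU : g⁻¹ * U ∈ orthogonalPhaseSubgroup i₀ := by
      refine ih _ fun j hj => UnitaryGroup.col_inv_mul_of_col_eq ?_
      rcases eq_or_ne j k with rfl | hjk
      · exact hgk
      · have hj' : j ∉ insert k s := by simp [hjk, hj]
        rw [hgs j hj', hU j hj']
    simpa using mul_mem hg hgU

end orthogonalPhaseSubgroup

lemma orthogonalPhaseSubgroup_eq_top (i₀ : ι) : orthogonalPhaseSubgroup i₀ = ⊤ :=
  (Subgroup.eq_top_iff' _).mpr fun U =>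
    mem_orthogonalPhaseSubgroup_of_col_eq_single Finset.univ U fun j hj =>
      absurd (Finset.mem_univ j) hj

end Matrix

/-- The unitary group `U(n)` is generated by its orthogonal subgroup `O(n)` (the unitary
matrices with real entries) together with the embedded subgroup
`U(1) = {diag(z,1,…,1) : |z| = 1}`. -/
theorem unitaryGroup_generated_by_orthogonal_and_U1 (n : ℕ) :
    Subgroup.closure
      ({U : Matrix.unitaryGroup (Fin (n + 1)) ℂ |
          ∀ i j, ((U : Matrix (Fin (n + 1)) (Fin (n + 1)) ℂ) i j).im = 0} ∪
       {U : Matrix.unitaryGroup (Fin (n + 1)) ℂ |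
          ∃ z : ℂ, ‖z‖ = 1 ∧
            (U : Matrix (Fin (n + 1)) (Fin (n + 1)) ℂ) =
              Matrix.diagonal (fun i => if i = 0 then z else 1)}) = ⊤ :=
  Matrix.orthogonalPhaseSubgroup_eq_top 0
end

section
/- The Lie algebra u(n) of skew-Hermitian n×n matrices is spanned, as a real vector space, by the skew-symmetric real matrices o(n) together with the orbit under the adjoint action of O(n) of the Lie algebra of U(1) = {diag(z,1,...,1)}. -/
/-!
Write a skew-Hermitian `X` as `A + iB` with `A` real skew-symmetric and `B` real symmetric.
By the spectral theorem `B = ∑ₖ λₖ uₖ uₖᵀ` for the columns `uₖ` of an orthogonal `U`, and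
`i λₖ uₖ uₖᵀ = g diag(iλₖ, 0, …, 0) g⁻¹` for any orthogonal `g` whose first column is `uₖ`,
for instance `U` with its columns `0` and `k` swapped.
-/

open Matrix Complex

namespace Matrix

variable {l m n R : Type*} [Fintype m] [DecidableEq m]

theorem mul_diagonal_mul_eq_sum_smul_vecMulVec [CommSemiring R] (M : Matrix l m R)
    (N : Matrix m n R) (d : m → R) :
    M * diagonal d * N = ∑ k, d k • vecMulVec (fun i => M i k) (N k) := by
  ext i j
  rw [mul_apply]
  simp only [mul_diagonal, sum_apply, smul_apply, vecMulVec_apply, smul_eq_mul]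
  exact Finset.sum_congr rfl fun k _ => by ring

theorem mul_diagonal_single_mul [CommSemiring R] (M : Matrix l m R) (N : Matrix m n R) (k : m)
    (c : R) : M * diagonal (Pi.single k c) * N = c • vecMulVec (fun i => M i k) (N k) := by
  rw [mul_diagonal_mul_eq_sum_smul_vecMulVec, Finset.sum_eq_single k] <;> simp_all

theorem submatrix_id_mem_orthogonalGroup [CommRing R] {U : Matrix m m R}
    (hU : U ∈ orthogonalGroup m R) (σ : Equiv.Perm m) :
    U.submatrix id σ ∈ orthogonalGroup m R := by
  rw [mem_orthogonalGroup_iff'] at hU ⊢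
  simpa [hU] using submatrix_mul_equiv Uᵀ U σ (Equiv.refl m) σ

theorem IsSymm.exists_mem_orthogonalGroup_eq_mul_diagonal_mul_transpose {B : Matrix m m ℝ}
    (hB : B.IsSymm) : ∃ U ∈ orthogonalGroup m ℝ, ∃ d : m → ℝ, B = U * diagonal d * Uᵀ := by
  have hB' : B.IsHermitian := isHermitian_iff_isSymm.2 hB
  refine ⟨hB'.eigenvectorUnitary, hB'.eigenvectorUnitary.2, hB'.eigenvalues, ?_⟩
  conv_lhs => rw [hB'.spectral_theorem]
  simp [star_eq_conjTranspose, conjTranspose_eq_transpose_of_trivial]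

theorem inv_map_ofReal_of_mem_orthogonalGroup {g : Matrix m m ℝ}
    (hg : g ∈ orthogonalGroup m ℝ) : (g.map ((↑) : ℝ → ℂ))⁻¹ = (g.map (↑))ᵀ := by
  refine inv_eq_left_inv ?_
  rw [mem_orthogonalGroup_iff'] at hg
  have := congrArg ofRealHom.mapMatrix hg
  rwa [map_mul, map_one, RingHom.mapMatrix_apply, RingHom.mapMatrix_apply, transpose_map] at this

theorem map_ofReal_mul_diagonal_single_mul_inv {g : Matrix m m ℝ}
    (hg : g ∈ orthogonalGroup m ℝ) (k : m) (c : ℂ) :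
    g.map (fun a => (a : ℂ)) * diagonal (Pi.single k c) * (g.map (fun a => (a : ℂ)))⁻¹ =
      c • vecMulVec (fun i => (g i k : ℂ)) (fun i => (g i k : ℂ)) := by
  rw [inv_map_ofReal_of_mem_orthogonalGroup hg, mul_diagonal_single_mul]
  rfl

end Matrix

section SkewHermitian

variable {m : Type*}

def realSkewSymmetric : Set (Matrix m m ℂ) :=
  {X | (∀ i j, (X i j).im = 0) ∧ Xᵀ = -X}

theorem realSkewSymmetric_subset_skewAdjoint :
    realSkewSymmetric ⊆ (skewAdjoint.submodule ℝ (Matrix m m ℂ) : Set (Matrix m m ℂ)) := by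
  rintro X ⟨hre, hskew⟩
  change Xᴴ = -X
  rw [← hskew]
  ext i j
  simp [conj_eq_iff_im.2 (hre j i)]

theorem map_ofReal_mem_realSkewSymmetric {A : Matrix m m ℝ} (hA : Aᵀ = -A) :
    A.map (fun a => (a : ℂ)) ∈ realSkewSymmetric :=
  ⟨fun _ _ => ofReal_im _, by rw [← transpose_map, hA, Matrix.map_neg _ ofReal_neg]⟩

theorem eq_map_re_add_I_smul_map_im (X : Matrix m m ℂ) :
    X = (X.map re).map (fun a => (a : ℂ)) + I • (X.map im).map (fun a => (a : ℂ)) := by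
  ext i j
  apply Complex.ext <;> simp

theorem transpose_map_re_of_conjTranspose_eq_neg {X : Matrix m m ℂ} (hX : Xᴴ = -X) :
    (X.map re)ᵀ = -X.map re := by
  ext i j
  simpa using congrArg re (congrFun (congrFun hX i) j)

theorem isSymm_map_im_of_conjTranspose_eq_neg {X : Matrix m m ℂ} (hX : Xᴴ = -X) :
    (X.map im).IsSymm := by
  ext i j
  simpa using congrArg im (congrFun (congrFun hX i) j)

variable [Fintype m] [DecidableEq m]

def orthogonalAdjointOrbit (i₀ : m) : Set (Matrix m m ℂ) :=
  {X | ∃ g : Matrix m m ℝ, g ∈ orthogonalGroup m ℝ ∧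
    ∃ t : ℝ, X = (g.map (fun a => (a : ℂ))) *
      diagonal (fun i => if i = i₀ then (t : ℂ) * I else 0) * (g.map (fun a => (a : ℂ)))⁻¹}

theorem mem_orthogonalAdjointOrbit_iff {i₀ : m} {X : Matrix m m ℂ} :
    X ∈ orthogonalAdjointOrbit i₀ ↔ ∃ g ∈ orthogonalGroup m ℝ, ∃ t : ℝ,
      X = ((t : ℂ) * I) • vecMulVec (fun i => (g i i₀ : ℂ)) (fun i => (g i i₀ : ℂ)) := by
  refine exists_congr fun g => and_congr_right fun hg => exists_congr fun t => ?_
  have hdiag : (fun i => if i = i₀ then (t : ℂ) * I else 0) = Pi.single i₀ ((t : ℂ) * I) :=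
    funext fun i => (Pi.single_apply i₀ _ i).symm
  rw [hdiag, map_ofReal_mul_diagonal_single_mul_inv hg]

theorem orthogonalAdjointOrbit_subset_skewAdjoint (i₀ : m) :
    orthogonalAdjointOrbit i₀ ⊆ (skewAdjoint.submodule ℝ (Matrix m m ℂ) : Set (Matrix m m ℂ)) := by
  intro X hX
  obtain ⟨g, -, t, rfl⟩ := mem_orthogonalAdjointOrbit_iff.1 hX
  change _ᴴ = -_
  ext i j
  simp only [conjTranspose_apply, Matrix.neg_apply, Matrix.smul_apply, Matrix.vecMulVec_apply,
    smul_eq_mul, star_mul', Complex.star_def, conj_ofReal, conj_I]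
  ring

theorem smul_vecMulVec_col_mem_orthogonalAdjointOrbit {U : Matrix m m ℝ}
    (hU : U ∈ orthogonalGroup m ℝ) (i₀ k : m) (t : ℝ) :
    ((t : ℂ) * I) • vecMulVec (fun i => (U i k : ℂ)) (fun i => (U i k : ℂ)) ∈
      orthogonalAdjointOrbit i₀ := by
  refine mem_orthogonalAdjointOrbit_iff.2
    ⟨U.submatrix id (Equiv.swap i₀ k), submatrix_id_mem_orthogonalGroup hU _, t, ?_⟩
  simp

theorem I_smul_map_ofReal_mem_span_orthogonalAdjointOrbit {B : Matrix m m ℝ} (hB : B.IsSymm)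
    (i₀ : m) : I • B.map (fun a => (a : ℂ)) ∈ Submodule.span ℝ (orthogonalAdjointOrbit i₀) := by
  obtain ⟨U, hU, d, rfl⟩ := hB.exists_mem_orthogonalGroup_eq_mul_diagonal_mul_transpose
  have hconj : I • (U * diagonal d * Uᵀ).map (fun a => (a : ℂ)) =
      U.map (fun a => (a : ℂ)) * diagonal (fun k => (d k : ℂ) * I) *
        (U.map (fun a => (a : ℂ)))ᵀ := by
    change I • (U * diagonal d * Uᵀ).map ofRealHom = _
    rw [Matrix.map_mul, Matrix.map_mul, diagonal_map (map_zero _), transpose_map, ← smul_mul,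
      ← Matrix.mul_smul, ← diagonal_smul]
    congr 3
    ext k
    simp [mul_comm]
  rw [hconj, mul_diagonal_mul_eq_sum_smul_vecMulVec]
  exact Submodule.sum_mem _ fun k _ =>
    Submodule.subset_span (smul_vecMulVec_col_mem_orthogonalAdjointOrbit hU i₀ k (d k))

theorem span_realSkewSymmetric_union_orthogonalAdjointOrbit (i₀ : m) :
    Submodule.span ℝ (realSkewSymmetric ∪ orthogonalAdjointOrbit i₀) =
      skewAdjoint.submodule ℝ (Matrix m m ℂ) := by
  refine le_antisymm (Submodule.span_le.2 (Set.union_subset realSkewSymmetric_subset_skewAdjoint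
    (orthogonalAdjointOrbit_subset_skewAdjoint i₀))) fun X (hX : Xᴴ = -X) => ?_
  rw [eq_map_re_add_I_smul_map_im X]
  exact add_mem
    (Submodule.subset_span (Or.inl (map_ofReal_mem_realSkewSymmetric
      (transpose_map_re_of_conjTranspose_eq_neg hX))))
    (Submodule.span_mono Set.subset_union_right
      (I_smul_map_ofReal_mem_span_orthogonalAdjointOrbit
        (isSymm_map_im_of_conjTranspose_eq_neg hX) i₀))

end SkewHermitian

/-- The Lie algebra `u(n)` of skew-Hermitian `n×n` matrices is spanned, as a real vector
space, by the real skew-symmetric matrices `o(n)` together with the orbit under the adjoint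
action of `O(n)` of the Lie algebra `{diag(it,0,…,0) : t ∈ ℝ}` of the embedded `U(1)`. -/
theorem skewHermitian_spanned_by_skewSymmetric_and_adjoint_orbit (n : ℕ) :
    (Submodule.span ℝ
      ({X : Matrix (Fin (n + 1)) (Fin (n + 1)) ℂ |
          (∀ i j, (X i j).im = 0) ∧ Xᵀ = -X} ∪
       {X : Matrix (Fin (n + 1)) (Fin (n + 1)) ℂ |
          ∃ g : Matrix (Fin (n + 1)) (Fin (n + 1)) ℝ, g ∈ Matrix.orthogonalGroup (Fin (n + 1)) ℝ ∧
            ∃ t : ℝ, X = (g.map (fun a => (a : ℂ))) *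
              Matrix.diagonal (fun i => if i = 0 then (t : ℂ) * I else 0) *
              (g.map (fun a => (a : ℂ)))⁻¹}) : Set (Matrix (Fin (n + 1)) (Fin (n + 1)) ℂ)) =
    {X : Matrix (Fin (n + 1)) (Fin (n + 1)) ℂ | Xᴴ = -X} :=
  congrArg SetLike.coe (span_realSkewSymmetric_union_orthogonalAdjointOrbit 0)
end

section
/- The operator E = d/dx + x maps the Schwartz space S(ℝ) onto S(ℝ) and its kernel is the one-dimensional space spanned by e^{-x²/2}. -/
/-!
Conjugating by the Gaussian turns `E` into `d/dx`: `(e^{x²/2} f)' = e^{x²/2} (f' + x f)`. Hence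
the kernel of `E` consists of the multiples of `e^{-x²/2}`, and `E` has the right inverse
`g ↦ F(x) = e^{-x²/2} ∫₀ˣ e^{t²/2} g(t) dt`. If `g` is a Schwartz function then so is `F`:
for `t` between `0` and `x` the kernel satisfies `|x|ᵏ e^{(t²-x²)/2} ≤ 2^{k-1} (|t|ᵏ + k! e^{1/2})`,
so `|x|ᵏ |F(x)|` is bounded by a weighted `L¹` norm of `g`, and the derivatives of `F` inherit
this decay through the recurrence `F⁽ⁿ⁺²⁾ = g⁽ⁿ⁺¹⁾ - x F⁽ⁿ⁺¹⁾ - (n+1) F⁽ⁿ⁾`.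
-/

open Complex MeasureTheory
open scoped Nat ContDiff SchwartzMap

def RapidDecay {E F : Type*} [Norm E] [Norm F] (f : E → F) : Prop :=
  ∀ k : ℕ, ∃ C, ∀ x, ‖x‖ ^ k * ‖f x‖ ≤ C

namespace RapidDecay

variable {E F : Type*} [NormedAddCommGroup E] [NormedAddCommGroup F] {f g : E → F}

theorem add (hf : RapidDecay f) (hg : RapidDecay g) : RapidDecay (f + g) := fun k => by
  obtain ⟨C, hC⟩ := hf k
  obtain ⟨D, hD⟩ := hg k
  refine ⟨C + D, fun x => ?_⟩
  calc ‖x‖ ^ k * ‖(f + g) x‖ ≤ ‖x‖ ^ k * ‖f x‖ + ‖x‖ ^ k * ‖g x‖ := by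
        rw [← mul_add]; gcongr; exact norm_add_le _ _
    _ ≤ C + D := add_le_add (hC x) (hD x)

theorem sub (hf : RapidDecay f) (hg : RapidDecay g) : RapidDecay (f - g) := fun k => by
  obtain ⟨C, hC⟩ := hf k
  obtain ⟨D, hD⟩ := hg k
  refine ⟨C + D, fun x => ?_⟩
  calc ‖x‖ ^ k * ‖(f - g) x‖ ≤ ‖x‖ ^ k * ‖f x‖ + ‖x‖ ^ k * ‖g x‖ := by
        rw [← mul_add]; gcongr; exact norm_sub_le _ _
    _ ≤ C + D := add_le_add (hC x) (hD x)

theorem const_smul {𝕜 : Type*} [NormedField 𝕜] [NormedSpace 𝕜 F] (hf : RapidDecay f) (c : 𝕜) :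
    RapidDecay (c • f) := fun k => by
  obtain ⟨C, hC⟩ := hf k
  refine ⟨‖c‖ * C, fun x => ?_⟩
  rw [Pi.smul_apply, norm_smul, mul_left_comm]
  exact mul_le_mul_of_nonneg_left (hC x) (norm_nonneg c)

theorem id_smul {𝕜 : Type*} [NormedField 𝕜] [NormedSpace 𝕜 F] {f : 𝕜 → F} (hf : RapidDecay f) :
    RapidDecay (fun x => x • f x) := fun k => by
  obtain ⟨C, hC⟩ := hf (k + 1)
  exact ⟨C, fun x => by rw [norm_smul, ← mul_assoc, ← pow_succ]; exact hC x⟩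

end RapidDecay

namespace SchwartzMap

variable {F : Type*} [NormedAddCommGroup F] [NormedSpace ℝ F]

theorem rapidDecay_iteratedDeriv (g : 𝓢(ℝ, F)) (n : ℕ) : RapidDecay (iteratedDeriv n g) :=
  fun k => by
    obtain ⟨C, hC⟩ := g.decay' k n
    exact ⟨C, fun x => by rw [← norm_iteratedFDeriv_eq_norm_iteratedDeriv]; exact hC x⟩

def ofRapidDecay (f : ℝ → F) (hf : ContDiff ℝ ∞ f) (hdecay : ∀ n, RapidDecay (iteratedDeriv n f)) :
    𝓢(ℝ, F) where
  toFun := f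
  smooth' := hf
  decay' k n := by
    obtain ⟨C, hC⟩ := hdecay n k
    exact ⟨C, fun x => by rw [norm_iteratedFDeriv_eq_norm_iteratedDeriv]; exact hC x⟩

@[simp]
theorem coe_ofRapidDecay (f : ℝ → F) (hf : ContDiff ℝ ∞ f)
    (hdecay : ∀ n, RapidDecay (iteratedDeriv n f)) : ⇑(ofRapidDecay f hf hdecay) = f :=
  rfl

end SchwartzMap

section Leibniz

variable {𝕜 F : Type*} [NontriviallyNormedField 𝕜] [NormedAddCommGroup F] [NormedSpace 𝕜 F]
  {f : 𝕜 → F}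

theorem ContDiff.hasDerivAt_iteratedDeriv (hf : ContDiff 𝕜 ∞ f) (n : ℕ) (x : 𝕜) :
    HasDerivAt (iteratedDeriv n f) (iteratedDeriv (n + 1) f x) x := by
  rw [iteratedDeriv_succ]
  exact (hf.differentiable_iteratedDeriv n (mod_cast ENat.natCast_lt_top n) x).hasDerivAt

theorem iteratedDeriv_succ_id_smul (hf : ContDiff 𝕜 ∞ f) (n : ℕ) :
    iteratedDeriv (n + 1) (fun x => x • f x) =
      fun x => x • iteratedDeriv (n + 1) f x + (n + 1 : 𝕜) • iteratedDeriv n f x := by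
  induction n with
  | zero =>
    ext x
    have h := (hasDerivAt_id' x).fun_smul (hf.hasDerivAt_iteratedDeriv 0 x)
    rw [iteratedDeriv_zero] at h
    rw [iteratedDeriv_one, h.deriv]
    simp [add_comm]
  | succ n ih =>
    ext x
    rw [iteratedDeriv_succ, ih, (((hasDerivAt_id' x).fun_smul
      (hf.hasDerivAt_iteratedDeriv (n + 1) x)).fun_add
      ((hf.hasDerivAt_iteratedDeriv n x).fun_const_smul _)).deriv]
    push_cast
    simp only [one_smul]
    module

end Leibniz

theorem pow_mul_exp_neg_sq_div_two_le (k : ℕ) {s : ℝ} (hs : 0 ≤ s) :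
    s ^ k * Real.exp (-s ^ 2 / 2) ≤ k ! * Real.exp (1 / 2) := by
  have hpow : s ^ k ≤ k ! * Real.exp s := by
    have := Real.pow_div_factorial_le_exp s hs k
    rwa [div_le_iff₀ (by positivity), mul_comm] at this
  have hexp : Real.exp (-s ^ 2 / 2) ≤ Real.exp (1 / 2 - s) :=
    Real.exp_le_exp.2 (by nlinarith [sq_nonneg (s - 1)])
  calc s ^ k * Real.exp (-s ^ 2 / 2) ≤ k ! * Real.exp s * Real.exp (1 / 2 - s) := by gcongr
    _ = k ! * Real.exp (1 / 2) := by rw [mul_assoc, ← Real.exp_add, add_sub_cancel]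

theorem abs_pow_mul_exp_sq_sub_sq_le (k : ℕ) {a b : ℝ} (hab : |a| ≤ |b|) :
    |b| ^ k * Real.exp ((a ^ 2 - b ^ 2) / 2) ≤
      2 ^ (k - 1) * (|a| ^ k + k ! * Real.exp (1 / 2)) := by
  obtain ⟨s, hs, hb⟩ : ∃ s, 0 ≤ s ∧ |b| = |a| + s := ⟨|b| - |a|, by linarith, by ring⟩
  have hexp : Real.exp ((a ^ 2 - b ^ 2) / 2) ≤ Real.exp (-s ^ 2 / 2) := by
    rw [← sq_abs a, ← sq_abs b, hb]
    exact Real.exp_le_exp.2 (by nlinarith [abs_nonneg a])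
  have hexp_le_one : Real.exp (-s ^ 2 / 2) ≤ 1 := Real.exp_le_one_iff.2 (by nlinarith)
  calc |b| ^ k * Real.exp ((a ^ 2 - b ^ 2) / 2)
      ≤ 2 ^ (k - 1) * (|a| ^ k + s ^ k) * Real.exp (-s ^ 2 / 2) := by
        rw [hb]; gcongr; exact add_pow_le (abs_nonneg a) hs k
    _ = 2 ^ (k - 1) * (|a| ^ k * Real.exp (-s ^ 2 / 2) + s ^ k * Real.exp (-s ^ 2 / 2)) := by ring
    _ ≤ 2 ^ (k - 1) * (|a| ^ k + k ! * Real.exp (1 / 2)) := by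
        gcongr 2 ^ (k - 1) * ?_
        exact add_le_add (mul_le_of_le_one_right (by positivity) hexp_le_one)
          (pow_mul_exp_neg_sq_div_two_le k hs)

theorem abs_intervalIntegral_le_integral {h : ℝ → ℝ} (hint : Integrable h) (hnonneg : 0 ≤ h)
    (a b : ℝ) : |∫ t in a..b, h t| ≤ ∫ t, h t := by
  rw [intervalIntegral.abs_integral_eq_abs_integral_uIoc,
    abs_of_nonneg (setIntegral_nonneg measurableSet_uIoc fun t _ => hnonneg t)]
  exact setIntegral_le_integral hint (Filter.Eventually.of_forall hnonneg)

theorem hasDerivAt_cexp_sq_div_two (x : ℝ) :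
    HasDerivAt (fun y : ℝ => cexp ((y : ℂ) ^ 2 / 2)) (x * cexp ((x : ℂ) ^ 2 / 2)) x := by
  convert ((((hasDerivAt_id' x).ofReal_comp).fun_pow 2).div_const 2).cexp using 1
  push_cast; ring

theorem hasDerivAt_cexp_neg_sq_div_two (x : ℝ) :
    HasDerivAt (fun y : ℝ => cexp (-(y : ℂ) ^ 2 / 2)) (-x * cexp (-(x : ℂ) ^ 2 / 2)) x := by
  convert ((((hasDerivAt_id' x).ofReal_comp).fun_pow 2).fun_neg.div_const 2).cexp using 1
  push_cast; ring

section FirstOrderEquation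

variable {E : Type*} [NormedAddCommGroup E] [NormedSpace ℝ E] {g F : ℝ → E}

theorem iteratedDeriv_add_two_of_hasDerivAt (hg : ContDiff ℝ ∞ g) (hF : ContDiff ℝ ∞ F)
    (hF' : ∀ x, HasDerivAt F (g x - x • F x) x) (n : ℕ) :
    iteratedDeriv (n + 2) F = iteratedDeriv (n + 1) g -
      ((fun x => x • iteratedDeriv (n + 1) F x) + (n + 1 : ℝ) • iteratedDeriv n F) := by
  have hderiv : deriv F = g - fun x => x • F x := funext fun x => (hF' x).deriv
  have hxF : ContDiff ℝ ∞ fun x : ℝ => x • F x := contDiff_id.smul hF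
  ext x
  rw [iteratedDeriv_succ', hderiv, iteratedDeriv_sub (hg.contDiffAt.of_le (mod_cast le_top))
    (hxF.contDiffAt.of_le (mod_cast le_top)), iteratedDeriv_succ_id_smul hF]
  rfl

theorem rapidDecay_iteratedDeriv_of_hasDerivAt (g : 𝓢(ℝ, E)) (hF : ContDiff ℝ ∞ F)
    (hF' : ∀ x, HasDerivAt F (g x - x • F x) x) (hdecay : RapidDecay F) (n : ℕ) :
    RapidDecay (iteratedDeriv n F) := by
  induction n using Nat.twoStepInduction with
  | zero => rwa [iteratedDeriv_zero]
  | one =>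
    rw [iteratedDeriv_one, funext fun x => (hF' x).deriv]
    exact (by simpa using g.rapidDecay_iteratedDeriv 0 : RapidDecay g).sub hdecay.id_smul
  | more n h₀ h₁ =>
    rw [iteratedDeriv_add_two_of_hasDerivAt (g.smooth ⊤) hF hF']
    exact (g.rapidDecay_iteratedDeriv _).sub (h₁.id_smul.add (h₀.const_smul _))

end FirstOrderEquation

noncomputable def annihilationRightInverse (g : ℝ → ℂ) (x : ℝ) : ℂ :=
  cexp (-(x : ℂ) ^ 2 / 2) * ∫ t in (0 : ℝ)..x, cexp ((t : ℂ) ^ 2 / 2) * g t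

theorem cexp_neg_sq_div_two_mul_cexp_sq_div_two (x : ℝ) :
    cexp (-(x : ℂ) ^ 2 / 2) * cexp ((x : ℂ) ^ 2 / 2) = 1 := by
  rw [← Complex.exp_add, neg_div, neg_add_cancel, Complex.exp_zero]

section AnnihilationRightInverse

variable {g : ℝ → ℂ}

theorem hasDerivAt_annihilationRightInverse (hg : Continuous g) (x : ℝ) :
    HasDerivAt (annihilationRightInverse g) (g x - x • annihilationRightInverse g x) x := by
  have hu : Continuous fun t : ℝ => cexp ((t : ℂ) ^ 2 / 2) * g t := by fun_prop
  refine ((hasDerivAt_cexp_neg_sq_div_two x).mul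
    (hu.integral_hasStrictDerivAt 0 x).hasDerivAt).congr_deriv ?_
  rw [annihilationRightInverse, real_smul, ← mul_assoc, cexp_neg_sq_div_two_mul_cexp_sq_div_two]
  ring

theorem contDiff_annihilationRightInverse (hg : ContDiff ℝ ∞ g) :
    ContDiff ℝ ∞ (annihilationRightInverse g) := by
  have hu : ContDiff ℝ ∞ fun t : ℝ => cexp ((t : ℂ) ^ 2 / 2) * g t :=
    ((ofRealCLM.contDiff.pow 2).div_const 2).cexp.mul hg
  have hprim : ContDiff ℝ ∞ fun x : ℝ => ∫ t in (0 : ℝ)..x, cexp ((t : ℂ) ^ 2 / 2) * g t :=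
    contDiff_infty_iff_deriv.2
      ⟨fun x => (hu.continuous.integral_hasStrictDerivAt 0 x).hasDerivAt.differentiableAt,
        by rwa [funext (hu.continuous.deriv_integral _ 0)]⟩
  exact ((ofRealCLM.contDiff.pow 2).neg.div_const 2).cexp.mul hprim

theorem rapidDecay_annihilationRightInverse (g : 𝓢(ℝ, ℂ)) :
    RapidDecay (annihilationRightInverse g) := fun k => by
  set c : ℝ := 2 ^ (k - 1)
  set h : ℝ → ℝ := fun t => c * (‖t‖ ^ k * ‖g t‖ + k ! * Real.exp (1 / 2) * ‖g t‖)
  have hint : Integrable h :=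
    ((g.integrable_pow_mul volume k).add (g.integrable.norm.const_mul _)).const_mul c
  refine ⟨∫ t, h t, fun x => ?_⟩
  have hbound : ∀ t ∈ Set.uIoc 0 x,
      ‖(‖x‖ ^ k * cexp (-(x : ℂ) ^ 2 / 2) : ℂ) * (cexp ((t : ℂ) ^ 2 / 2) * g t)‖ ≤ h t := by
    intro t ht
    have htx : |t| ≤ |x| := by simpa using Set.abs_sub_left_of_mem_uIcc (Set.uIoc_subset_uIcc ht)
    calc ‖(‖x‖ ^ k * cexp (-(x : ℂ) ^ 2 / 2) : ℂ) * (cexp ((t : ℂ) ^ 2 / 2) * g t)‖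
        = |x| ^ k * Real.exp ((t ^ 2 - x ^ 2) / 2) * ‖g t‖ := by
          simp only [norm_mul, norm_pow, Complex.norm_exp, Complex.norm_real, Real.norm_eq_abs,
            abs_abs]
          rw [sub_div, sub_eq_neg_add, Real.exp_add]
          simp only [← ofReal_pow, neg_div, neg_re, div_ofNat_re, ofReal_re]
          ring
      _ ≤ c * (|t| ^ k + k ! * Real.exp (1 / 2)) * ‖g t‖ := by
          gcongr ?_ * _
          exact abs_pow_mul_exp_sq_sub_sq_le k htx
      _ = h t := by simp only [h, Real.norm_eq_abs]; ring
  calc ‖x‖ ^ k * ‖annihilationRightInverse g x‖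
      = ‖∫ t in (0 : ℝ)..x,
          (‖x‖ ^ k * cexp (-(x : ℂ) ^ 2 / 2) : ℂ) * (cexp ((t : ℂ) ^ 2 / 2) * g t)‖ := by
        rw [intervalIntegral.integral_const_mul, annihilationRightInverse, norm_mul, norm_mul,
          norm_mul, ← mul_assoc]
        simp
    _ ≤ |∫ t in (0 : ℝ)..x, h t| :=
        intervalIntegral.norm_integral_le_abs_of_norm_le
          ((ae_restrict_iff' measurableSet_uIoc).2 (Filter.Eventually.of_forall hbound))
          hint.intervalIntegrable
    _ ≤ ∫ t, h t := abs_intervalIntegral_le_integral hint (fun t => by positivity) 0 x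

end AnnihilationRightInverse

theorem eq_mul_cexp_neg_sq_div_two_of_deriv_add_mul_eq_zero {f : ℝ → ℂ} (hf : Differentiable ℝ f)
    (h : ∀ x : ℝ, deriv f x + x * f x = 0) (x : ℝ) :
    f x = f 0 * cexp (-(x : ℂ) ^ 2 / 2) := by
  have hderiv : ∀ y : ℝ, HasDerivAt (fun y : ℝ => cexp ((y : ℂ) ^ 2 / 2) * f y) 0 y := fun y => by
    refine ((hasDerivAt_cexp_sq_div_two y).mul (hf y).hasDerivAt).congr_deriv ?_
    linear_combination cexp ((y : ℂ) ^ 2 / 2) * h y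
  have hconst := is_const_of_deriv_eq_zero (fun y => (hderiv y).differentiableAt)
    (fun y => (hderiv y).deriv) x 0
  simp only [ofReal_zero, ne_eq, OfNat.ofNat_ne_zero, not_false_eq_true, zero_pow, zero_div,
    Complex.exp_zero, one_mul] at hconst
  rw [← hconst, mul_comm, ← mul_assoc, cexp_neg_sq_div_two_mul_cexp_sq_div_two, one_mul]

theorem deriv_const_mul_cexp_neg_sq_div_two_add_mul (c : ℂ) (x : ℝ) :
    deriv (fun y : ℝ => c * cexp (-(y : ℂ) ^ 2 / 2)) x + x * (c * cexp (-(x : ℂ) ^ 2 / 2)) = 0 := by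
  rw [((hasDerivAt_cexp_neg_sq_div_two x).const_mul c).deriv]
  ring

/-- The operator `E = d/dx + x` maps the Schwartz space `S(ℝ)` onto itself, and its kernel
is the one-dimensional space spanned by the Gaussian `e^{-x²/2}`. -/
theorem annihilation_operator_surjective_kernel_gaussian :
    (∀ g : SchwartzMap ℝ ℂ, ∃ f : SchwartzMap ℝ ℂ,
        ∀ x : ℝ, deriv (fun y : ℝ => f y) x + (x : ℂ) * f x = g x) ∧
    (∀ f : SchwartzMap ℝ ℂ,
        (∀ x : ℝ, deriv (fun y : ℝ => f y) x + (x : ℂ) * f x = 0) ↔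
          ∃ c : ℂ, ∀ x : ℝ, f x = c * Complex.exp (-(x ^ 2) / 2)) := by
  refine ⟨fun g => ?_, fun f => ⟨fun h => ?_, fun ⟨c, hc⟩ x => ?_⟩⟩
  · have hsmooth := contDiff_annihilationRightInverse (g.smooth ⊤)
    have hderiv := hasDerivAt_annihilationRightInverse g.continuous
    refine ⟨.ofRapidDecay _ hsmooth (rapidDecay_iteratedDeriv_of_hasDerivAt g hsmooth hderiv
      (rapidDecay_annihilationRightInverse g)), fun x => ?_⟩
    rw [SchwartzMap.coe_ofRapidDecay, (hderiv x).deriv, real_smul, sub_add_cancel]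
  · exact ⟨f 0, eq_mul_cexp_neg_sq_div_two_of_deriv_add_mul_eq_zero f.differentiable h⟩
  · simp only [hc]
    exact deriv_const_mul_cexp_neg_sq_div_two_add_mul c x
end

section
/- Let A be a C*-algebra, P₁ = P₁* = P₁² and P₂ = P₂* = P₂² projections in A, and a ∈ A with a = P₂aP₁. Then there exists r ∈ A with ra = P₁ and ar = P₂ if and only if a*a is invertible in the corner C*-algebra P₁AP₁ and aa* is invertible in the corner C*-algebra P₂AP₂. -/
private lemma mul_ext {A : Type*} [Monoid A] {u v w : A} (h : u * v = w) :
    ∀ x : A, u * (v * x) = w * x := fun x => by rw [← mul_assoc, h]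

/-- Let `A` be a C*-algebra, `P₁, P₂ ∈ A` projections, and `a ∈ A` with `a = P₂aP₁`.
Then there exists `r ∈ A` with `ra = P₁` and `ar = P₂` if and only if `a*a` is invertible
in the corner C*-algebra `P₁AP₁` (with unit `P₁`) and `aa*` is invertible in the corner
C*-algebra `P₂AP₂` (with unit `P₂`). -/
theorem corner_invertibility_criterion {A : Type*} [CStarAlgebra A]
    (P₁ P₂ a : A) (hP₁ : P₁ = star P₁) (hP₁' : P₁ * P₁ = P₁)
    (hP₂ : P₂ = star P₂) (hP₂' : P₂ * P₂ = P₂) (ha : a = P₂ * a * P₁) :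
    (∃ r : A, r * a = P₁ ∧ a * r = P₂) ↔
      ((∃ b : A, b = P₁ * b * P₁ ∧ b * (star a * a) = P₁ ∧ (star a * a) * b = P₁) ∧
       (∃ c : A, c = P₂ * c * P₂ ∧ c * (a * star a) = P₂ ∧ (a * star a) * c = P₂)) := by
  have haP₁ : a * P₁ = a := by
    conv_lhs => rw [ha]
    rw [mul_assoc (P₂ * a), hP₁', ← ha]
  have hP₂a : P₂ * a = a := by
    conv_lhs => rw [ha]
    rw [← mul_assoc, ← mul_assoc, hP₂', ← ha]
  have hsa : star a = P₁ * star a * P₂ := by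
    conv_lhs => rw [ha]
    simp only [star_mul, ← hP₁, ← hP₂, mul_assoc]
  have hsaP₂ : star a * P₂ = star a := by
    conv_lhs => rw [hsa]
    rw [mul_assoc (P₁ * star a), hP₂', ← hsa]
  have hP₁sa : P₁ * star a = star a := by
    conv_lhs => rw [hsa]
    rw [← mul_assoc, ← mul_assoc, hP₁', ← hsa]
  constructor
  · rintro ⟨r, hra, har⟩
    set r₀ := P₁ * r * P₂ with hr₀
    have hr₀a : r₀ * a = P₁ := by
      rw [hr₀, mul_assoc, hP₂a, mul_assoc, hra, hP₁']
    have har₀ : a * r₀ = P₂ := by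
      rw [hr₀, ← mul_assoc, ← mul_assoc, haP₁, har, hP₂']
    have hP₁r₀ : P₁ * r₀ = r₀ := by rw [hr₀, ← mul_assoc, ← mul_assoc, hP₁']
    have hr₀P₂ : r₀ * P₂ = r₀ := by rw [hr₀, mul_assoc, mul_assoc, hP₂', ← mul_assoc, mul_assoc]
    have hsr₀a : star r₀ * star a = P₂ := by rw [← star_mul, har₀, ← hP₂]
    have hsasr₀ : star a * star r₀ = P₁ := by rw [← star_mul, hr₀a, ← hP₁]
    have hP₂sr₀ : P₂ * star r₀ = star r₀ := by
      rw [hP₂, ← star_mul, hr₀P₂]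
    have hsr₀P₁ : star r₀ * P₁ = star r₀ := by
      rw [hP₁, ← star_mul, hP₁r₀]
    refine ⟨⟨r₀ * star r₀, ?_, ?_, ?_⟩, ⟨star r₀ * r₀, ?_, ?_, ?_⟩⟩
    · simp only [mul_assoc, mul_ext hP₁r₀, hsr₀P₁]
    · simp only [mul_assoc, mul_ext hsr₀a, hP₂a, hr₀a]
    · simp only [mul_assoc, mul_ext har₀, hP₂sr₀, hsasr₀]
    · simp only [mul_assoc, mul_ext hP₂sr₀, hr₀P₂]
    · simp only [mul_assoc, mul_ext hr₀a, hP₁sa, hsr₀a]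
    · simp only [mul_assoc, mul_ext hsasr₀, hP₁r₀, har₀]
  · rintro ⟨⟨b, hb, hb1, hb2⟩, ⟨c, hc, hc1, hc2⟩⟩
    have hb1e : ∀ x : A, b * (star a * (a * x)) = P₁ * x := fun x => by
      rw [← mul_assoc, ← mul_assoc, mul_assoc b, hb1]
    have hc2' : a * (star a * c) = P₂ := by rw [← mul_assoc, hc2]
    refine ⟨b * star a, ?_, ?_⟩
    · rw [mul_assoc, hb1]
    · calc a * (b * star a) = a * (b * (star a * (a * (star a * c)))) := by
            rw [hc2', hsaP₂]
        _ = P₂ := by rw [hb1e, mul_ext hP₁sa, hc2']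
end

section
/- Let P ∈ Mat_N(ℂ[G]) be a projection over the group algebra of a group G acting unitarily on L²(ℝⁿ) via a unitary representation ρ, and suppose E : V → W is a surjective G-equivariant linear operator with one-dimensional G-invariant kernel spanned by a vector κ (e.g. the Gaussian e^{-|x|²/2}). Then the twisted operator E ⊗ 1_N restricted to the range of the projection 1 ⊗ P has trivial cokernel and kernel isomorphic to P(ℂᴺ ⊗ span κ) ≅ Im(P|_{ℂᴺ}) where P acts on ℂᴺ via the trivial evaluation (each group element acting as identity on κ); consequently its index equals tr(Σ_{g∈G} P_g) = Σ_{g∈G} tr(P_g), the sum of matrix traces of the components of P. -/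
open Matrix

section

variable {G : Type*} [Group G] {V W : Type*}
  [AddCommGroup V] [Module ℂ V] [AddCommGroup W] [Module ℂ W] {N : ℕ}

/-- The projection `1 ⊗ P = Σ_g (1 ⊗ P_g)(ρ_g ⊗ 1_N)` on `V ⊗ ℂᴺ ≅ (Fin N → V)`
determined by a matrix element `P = Σ_g P_g·g` over the group algebra `ℂ[G]` and a
representation `ρ` of `G` on `V`. -/
noncomputable def twistedMatrixOp (ρ : G →* (V ≃ₗ[ℂ] V))
    (P : G →₀ Matrix (Fin N) (Fin N) ℂ) : (Fin N → V) →ₗ[ℂ] (Fin N → V) :=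
  LinearMap.pi fun i =>
    ∑ g ∈ P.support, ∑ j : Fin N,
      P g i j • ((ρ g).toLinearMap.comp (LinearMap.proj j))

/-- The operator `E ⊗ 1_N` acting componentwise on `Fin N → V`. -/
noncomputable def componentwiseOp (E : V →ₗ[ℂ] W) : (Fin N → V) →ₗ[ℂ] (Fin N → W) :=
  LinearMap.pi fun i => E.comp (LinearMap.proj i)

private lemma twisted_apply (ρ : G →* (V ≃ₗ[ℂ] V)) (P : G →₀ Matrix (Fin N) (Fin N) ℂ)
    (v : Fin N → V) (i : Fin N) :
    twistedMatrixOp ρ P v i = ∑ g ∈ P.support, ∑ j, P g i j • (ρ g) (v j) := by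
  simp [twistedMatrixOp]

private lemma componentwise_apply (E : V →ₗ[ℂ] W) (v : Fin N → V) (i : Fin N) :
    componentwiseOp E v i = E (v i) := by
  simp [componentwiseOp]

private lemma comp_twisted (ρ : G →* (V ≃ₗ[ℂ] V)) (σ : G →* (W ≃ₗ[ℂ] W)) (E : V →ₗ[ℂ] W)
    (hequiv : ∀ (g : G) (v : V), E ((ρ g) v) = (σ g) (E v))
    (P : G →₀ Matrix (Fin N) (Fin N) ℂ) (v : Fin N → V) :
    componentwiseOp E (twistedMatrixOp ρ P v)
      = twistedMatrixOp σ P (componentwiseOp E v) := by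
  funext i
  simp [componentwise_apply, twisted_apply, map_sum, _root_.map_smul, hequiv]

private lemma twisted_kappa (ρ : G →* (V ≃ₗ[ℂ] V)) (P : G →₀ Matrix (Fin N) (Fin N) ℂ)
    (κ : V) (hκinv : ∀ g : G, (ρ g) κ = κ) (c : Fin N → ℂ) :
    twistedMatrixOp ρ P (fun j => c j • κ)
      = fun i => ((∑ g ∈ P.support, P g) *ᵥ c) i • κ := by
  funext i
  rw [twisted_apply]
  simp only [_root_.map_smul, hκinv, smul_smul, Matrix.mulVec, dotProduct,
    Matrix.sum_apply, Finset.sum_smul, Finset.sum_mul]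
  rw [Finset.sum_comm]

private lemma twisted_idem (ρ : G →* (V ≃ₗ[ℂ] V)) (P : G →₀ Matrix (Fin N) (Fin N) ℂ)
    (hProj : ∀ g : G, ∑ h ∈ P.support, P h * P (h⁻¹ * g) = P g) (v : Fin N → V) :
    twistedMatrixOp ρ P (twistedMatrixOp ρ P v) = twistedMatrixOp ρ P v := by
  classical
  funext i
  set s := P.support with hs
  set T : Finset G := s ∪ s.image (fun p => p) ∪ (s ×ˢ s).image (fun p => p.1 * p.2) with hT
  have hsT : s ⊆ T := by intro x hx; simp [hT]; tauto
  set F : G → G → V := fun h g => ∑ k, ((P h * P g) i k) • (ρ (h * g)) (v k) with hF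
  have hF0 : ∀ h g, g ∉ s → F h g = 0 := by
    intro h g hg
    simp [hF, Finsupp.notMem_support_iff.mp hg]
  have step1 : twistedMatrixOp ρ P (twistedMatrixOp ρ P v) i = ∑ h ∈ s, ∑ g ∈ s, F h g := by
    rw [twisted_apply]
    refine Finset.sum_congr rfl fun h hh => ?_
    simp only [twisted_apply, map_sum, _root_.map_smul, Finset.smul_sum, smul_smul]
    rw [Finset.sum_comm]
    refine Finset.sum_congr rfl fun g hg => ?_
    rw [Finset.sum_comm, hF]
    refine Finset.sum_congr rfl fun k _ => ?_
    rw [Matrix.mul_apply, Finset.sum_smul]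
    refine Finset.sum_congr rfl fun j _ => ?_
    rw [_root_.map_mul ρ h g]
    rfl
  have step2 : ∀ h ∈ s, ∑ g ∈ s, F h g = ∑ u ∈ T, F h (h⁻¹ * u) := by
    intro h hh
    have hinj : Function.Injective (fun g => h * g) := mul_right_injective h
    have : ∑ g ∈ s, F h g = ∑ u ∈ s.image (fun g => h * g), F h (h⁻¹ * u) := by
      rw [Finset.sum_image (fun a _ b _ hab => hinj hab)]
      simp
    rw [this]
    refine Finset.sum_subset ?_ ?_
    · intro u hu
      simp only [Finset.mem_image] at hu
      obtain ⟨g, hg, rfl⟩ := hu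
      exact Finset.mem_union_right _
        (Finset.mem_image.mpr ⟨(h, g), Finset.mem_product.mpr ⟨hh, hg⟩, rfl⟩)
    · intro u _ hu
      apply hF0
      intro hmem
      exact hu (Finset.mem_image.mpr ⟨h⁻¹ * u, hmem, by simp⟩)
  have step3 : ∀ u ∈ T, ∑ h ∈ s, F h (h⁻¹ * u) = ∑ k, (P u) i k • (ρ u) (v k) := by
    intro u _
    have : ∀ h ∈ s, F h (h⁻¹ * u) = ∑ k, ((P h * P (h⁻¹ * u)) i k) • (ρ u) (v k) := by
      intro h _
      simp [hF, mul_inv_cancel_left]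
    rw [Finset.sum_congr rfl this, Finset.sum_comm]
    refine Finset.sum_congr rfl fun k _ => ?_
    rw [← Finset.sum_smul, ← Matrix.sum_apply, hProj u]
  rw [step1, Finset.sum_congr rfl step2, Finset.sum_comm, Finset.sum_congr rfl step3,
    twisted_apply]
  exact (Finset.sum_subset hsT fun u _ hu => by
    simp [Finsupp.notMem_support_iff.mp hu]).symm

/-- Let `P ∈ Mat_N(ℂ[G])` be a projection over the group algebra of a group `G` acting on
`V` and `W` via representations `ρ`, `σ`, and let `E : V → W` be a surjective
`G`-equivariant linear operator whose kernel is the line spanned by a `G`-invariant vector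
`κ` (e.g. the Gaussian `e^{-|x|²/2}`).  Then the twisted operator `E ⊗ 1_N` restricted to
the range of the projection `1 ⊗ P` has trivial cokernel, and its kernel is isomorphic to
the range of the matrix `M = Σ_g P_g` acting on `ℂᴺ`; consequently its index equals
`tr(Σ_g P_g) = Σ_g tr(P_g)`. -/
theorem twisted_operator_index (ρ : G →* (V ≃ₗ[ℂ] V)) (σ : G →* (W ≃ₗ[ℂ] W))
    (E : V →ₗ[ℂ] W)
    (hequiv : ∀ (g : G) (v : V), E ((ρ g) v) = (σ g) (E v))
    (hsurj : Function.Surjective E)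
    (κ : V) (hκ0 : κ ≠ 0) (hker : LinearMap.ker E = Submodule.span ℂ {κ})
    (hκinv : ∀ g : G, (ρ g) κ = κ)
    (P : G →₀ Matrix (Fin N) (Fin N) ℂ)
    (hProj : ∀ g : G, ∑ h ∈ P.support, P h * P (h⁻¹ * g) = P g) :
    (componentwiseOp E ∘ₗ twistedMatrixOp ρ P
        = twistedMatrixOp σ P ∘ₗ componentwiseOp E) ∧
    (∀ w ∈ LinearMap.range (twistedMatrixOp σ P),
        ∃ v ∈ LinearMap.range (twistedMatrixOp ρ P), componentwiseOp E v = w) ∧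
    Nonempty
      ((LinearMap.ker (componentwiseOp E (N := N)) ⊓
          LinearMap.range (twistedMatrixOp ρ P) : Submodule ℂ (Fin N → V)) ≃ₗ[ℂ]
        LinearMap.range (Matrix.toLin' (∑ g ∈ P.support, P g))) ∧
    ((Module.finrank ℂ
        (LinearMap.ker (componentwiseOp E (N := N)) ⊓
          LinearMap.range (twistedMatrixOp ρ P) : Submodule ℂ (Fin N → V)) : ℂ)
      = Matrix.trace (∑ g ∈ P.support, P g)) ∧
    Matrix.trace (∑ g ∈ P.support, P g) = ∑ g ∈ P.support, Matrix.trace (P g) := by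
  classical
  set M : Matrix (Fin N) (Fin N) ℂ := ∑ g ∈ P.support, P g with hM
  -- basic facts about κ
  have hEκ : E κ = 0 := by
    have : κ ∈ LinearMap.ker E := by
      rw [hker]; exact Submodule.mem_span_singleton_self κ
    exact this
  have hsi : ∀ a b : ℂ, a • κ = b • κ → a = b := by
    intro a b hab
    by_contra hne
    have : (a - b) • κ = 0 := by rw [sub_smul, hab, sub_self]
    rcases smul_eq_zero.mp this with h | h
    · exact hne (by linear_combination h)
    · exact hκ0 h
  -- the embedding c ↦ (i ↦ c i • κ)
  set L : (Fin N → ℂ) →ₗ[ℂ] (Fin N → V) :=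
    LinearMap.pi (fun i => ((LinearMap.proj i : (Fin N → ℂ) →ₗ[ℂ] ℂ)).smulRight κ) with hL
  have hLapp : ∀ c i, L c i = c i • κ := by intro c i; simp [hL]
  have hLinj : Function.Injective L := by
    intro c c' h
    funext i
    exact hsi _ _ (by rw [← hLapp, ← hLapp, h])
  have hκeq : ∀ c : Fin N → ℂ, twistedMatrixOp ρ P (L c) = L (M *ᵥ c) := by
    intro c
    have h1 : L c = fun j => c j • κ := by funext j; exact hLapp c j
    have h2 : L (M *ᵥ c) = fun i => (M *ᵥ c) i • κ := by funext i; exact hLapp _ i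
    rw [h1, h2, twisted_kappa ρ P κ hκinv c]
  -- idempotence of the matrix M
  have hMM : M * M = M := by
    apply Matrix.toLin'.injective
    apply LinearMap.ext
    intro d
    have h1 := twisted_idem ρ P hProj (L d)
    rw [hκeq, hκeq] at h1
    have h2 : M *ᵥ (M *ᵥ d) = M *ᵥ d := hLinj h1
    simp only [Matrix.toLin'_apply, ← Matrix.mulVec_mulVec, h2]
  -- claim 1
  have claim1 : componentwiseOp E ∘ₗ twistedMatrixOp ρ P
      = twistedMatrixOp σ P ∘ₗ componentwiseOp E := by
    apply LinearMap.ext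
    intro v
    exact comp_twisted ρ σ E hequiv P v
  refine ⟨claim1, ?_, ?_⟩
  -- claim 2 : surjectivity onto range
  · rintro w ⟨u, rfl⟩
    choose v hv using fun j => hsurj (u j)
    refine ⟨twistedMatrixOp ρ P v, LinearMap.mem_range_self _ v, ?_⟩
    rw [comp_twisted ρ σ E hequiv P v]
    congr 1
    funext j
    rw [componentwise_apply]
    exact hv j
  -- the linear equivalence
  · have hmem_ker : ∀ c : Fin N → ℂ, L c ∈ LinearMap.ker (componentwiseOp E (N := N)) := by
      intro c
      rw [LinearMap.mem_ker]
      funext i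
      rw [componentwise_apply, hLapp, _root_.map_smul, hEκ, smul_zero]
      rfl
    have hmaps : ∀ c ∈ LinearMap.range (Matrix.toLin' M),
        L c ∈ (LinearMap.ker (componentwiseOp E (N := N)) ⊓
          LinearMap.range (twistedMatrixOp ρ P)) := by
      rintro c ⟨d, rfl⟩
      refine Submodule.mem_inf.mpr ⟨hmem_ker _, ?_⟩
      refine ⟨L d, ?_⟩
      rw [hκeq d, Matrix.toLin'_apply]
    set e : LinearMap.range (Matrix.toLin' M) →ₗ[ℂ]
        (LinearMap.ker (componentwiseOp E (N := N)) ⊓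
          LinearMap.range (twistedMatrixOp ρ P) : Submodule ℂ (Fin N → V)) :=
      L.restrict hmaps with he
    have hbij : Function.Bijective e := by
      constructor
      · intro x y hxy
        have : L x.1 = L y.1 := congrArg Subtype.val hxy
        exact Subtype.ext (hLinj this)
      · rintro ⟨x, hx⟩
        obtain ⟨hx1, hx2⟩ := Submodule.mem_inf.mp hx
        -- x is componentwise in the kernel of E, hence a multiple of κ
        have hxκ : ∃ c : Fin N → ℂ, x = L c := by
          have : ∀ i, x i ∈ Submodule.span ℂ ({κ} : Set V) := by
            intro i
            rw [← hker, LinearMap.mem_ker]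
            have := LinearMap.mem_ker.mp hx1
            calc E (x i) = componentwiseOp E x i := (componentwise_apply E x i).symm
              _ = 0 := by rw [this]; rfl
          choose c hc using fun i => Submodule.mem_span_singleton.mp (this i)
          exact ⟨c, by funext i; rw [hLapp, hc i]⟩
        obtain ⟨c, rfl⟩ := hxκ
        -- x is in the range of the idempotent twisted operator, so fixed by it
        have hfix : twistedMatrixOp ρ P (L c) = L c := by
          obtain ⟨v, hv⟩ := hx2
          rw [← hv, twisted_idem ρ P hProj v]
        rw [hκeq] at hfix
        have hMc : M *ᵥ c = c := hLinj hfix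
        refine ⟨⟨c, ⟨c, ?_⟩⟩, Subtype.ext rfl⟩
        rw [Matrix.toLin'_apply]
        exact hMc
    have equiv := (LinearEquiv.ofBijective e hbij).symm
    refine ⟨⟨equiv⟩, ?_, ?_⟩
    -- trace computation
    · have hproj : LinearMap.IsProj (LinearMap.range (Matrix.toLin' M))
          (Matrix.toLin' M) := by
        refine ⟨fun x => LinearMap.mem_range_self _ x, ?_⟩
        rintro x ⟨y, rfl⟩
        rw [← LinearMap.comp_apply, ← Matrix.toLin'_mul, hMM]
      have htr := hproj.trace
      have htr2 : LinearMap.trace ℂ (Fin N → ℂ) (Matrix.toLin' M) = Matrix.trace M := by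
        rw [LinearMap.trace_eq_matrix_trace ℂ (Pi.basisFun ℂ (Fin N)),
          LinearMap.toMatrix_eq_toMatrix', LinearMap.toMatrix'_toLin']
      rw [equiv.finrank_eq, ← htr2, htr]
    · exact (Matrix.trace_sum _ _)

end
end
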